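/- Let r ≥ 1 and n ≥ 2r + 1 be integers, and let A ⊆ Z_n^2. Define A_0 = {x ∈ A : ∃ y ∈ B(x, 2r), |A ∩ B(y, 2r)| ≥ r²}. Then |A \ A_0| ≤ r²·n²/(2r+1)², and in particular |A \ A_0| ≤ n²/4. -/
import Mathlib


/-- The distance on the torus `(ℤ/nℤ)^d`: the infimum of the sup-norm distances between
integer lifts of the two points. -/
noncomputable def torusDist {d n : ℕ} (x y : Fin d → ZMod n) : ℕ :=
  sInf {k : ℕ | ∃ a b : Fin d → ℤ,
    (∀ i, (a i : ZMod n) = x i) ∧ (∀ i, (b i : ZMod n) = y i) ∧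
    (Finset.univ.sup fun i => (a i - b i).natAbs) = k}

/-- The closed ball of radius `r` around `x` in the torus `(ℤ/nℤ)^d`. -/
def torusBall {d n : ℕ} (x : Fin d → ZMod n) (r : ℕ) : Set (Fin d → ZMod n) :=
  {y | torusDist x y ≤ r}

/-- A set `C ⊆ (ℤ/nℤ)^d` is `r`-connected if any two of its points can be joined by a
finite sequence of points of `C` whose consecutive terms are at distance at most `r`. -/
def torusRConnected {d n : ℕ} (r : ℕ) (C : Set (Fin d → ZMod n)) : Prop :=
  ∀ x ∈ C, ∀ y ∈ C, ∃ (k : ℕ) (f : ℕ → Fin d → ZMod n),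
    f 0 = x ∧ f k = y ∧ (∀ j ≤ k, f j ∈ C) ∧ ∀ j < k, torusDist (f j) (f (j + 1)) ≤ r

lemma torusDist_comm {d n : ℕ} (x y : Fin d → ZMod n) : torusDist x y = torusDist y x := by
  unfold torusDist
  congr 1
  ext k
  constructor <;> rintro ⟨a, b, ha, hb, h⟩ <;>
    exact ⟨b, a, hb, ha, by rw [← h]; congr 1; funext i; rw [← Int.natAbs_neg, neg_sub]⟩

lemma torusDist_add_le {d n : ℕ} [NeZero n] (x : Fin d → ZMod n)
    (v : Fin d → ℕ) (m : ℕ) (hv : ∀ i, v i ≤ m) :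
    torusDist x (fun i => x i + (v i : ZMod n)) ≤ m := by
  have hmem : (Finset.univ.sup fun i => v i) ∈ {k : ℕ | ∃ a b : Fin d → ℤ,
      (∀ i, (a i : ZMod n) = x i) ∧
      (∀ i, (b i : ZMod n) = (fun i => x i + (v i : ZMod n)) i) ∧
      (Finset.univ.sup fun i => (a i - b i).natAbs) = k} := by
    refine ⟨fun i => ((x i).val : ℤ), fun i => ((x i).val : ℤ) + (v i : ℤ), ?_, ?_, ?_⟩
    · intro i; push_cast; simp [ZMod.natCast_val, ZMod.cast_id]
    · intro i; push_cast; simp [ZMod.natCast_val, ZMod.cast_id]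
    · congr 1; funext i; simp
  exact le_trans (Nat.sInf_le hmem) (Finset.sup_le fun i _ => hv i)

/-- **Discarding sparse sites costs little.**
Let `r ≥ 1`, `n ≥ 2r+1` and `A ⊆ (ℤ/nℤ)²`.  Define
`A₀ = {x ∈ A : ∃ y ∈ B(x, 2r), |A ∩ B(y, 2r)| ≥ r²}`.  Then
`|A \ A₀| ≤ r² n² / (2r+1)²`, and in particular `|A \ A₀| ≤ n² / 4`. -/
theorem sparse_sites_bound
    (r n : ℕ) (hr : 1 ≤ r) (hn : 2 * r + 1 ≤ n)
    (A A₀ : Set (Fin 2 → ZMod n))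
    (hA₀ : A₀ = {x ∈ A | ∃ y ∈ torusBall x (2 * r),
      r ^ 2 ≤ (A ∩ torusBall y (2 * r)).ncard}) :
    (((A \ A₀).ncard : ℝ) ≤ (r : ℝ) ^ 2 * (n : ℝ) ^ 2 / (2 * (r : ℝ) + 1) ^ 2) ∧
      ((A \ A₀).ncard : ℝ) ≤ (n : ℝ) ^ 2 / 4 := by
  classical
  have hn0 : NeZero n := ⟨by omega⟩
  have hSfin : (A \ A₀).Finite := Set.toFinite _
  set S : Finset (Fin 2 → ZMod n) := hSfin.toFinset with hS
  have hcard : (A \ A₀).ncard = S.card := Set.ncard_eq_toFinset_card _ hSfin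
  -- lower bound on ball cardinality
  have hball : ∀ x : Fin 2 → ZMod n,
      (2 * r + 1) ^ 2 ≤ (Finset.univ.filter fun y => torusDist x y ≤ 2 * r).card := by
    intro x
    have hinj : Set.InjOn (fun p : Fin 2 → Fin (2 * r + 1) => fun i => x i + ((p i : ℕ) : ZMod n))
        ↑(Finset.univ : Finset (Fin 2 → Fin (2 * r + 1))) := by
      intro p _ q _ h
      funext i
      have h1 : x i + ((p i : ℕ) : ZMod n) = x i + ((q i : ℕ) : ZMod n) := congrFun h i
      have h2 : ((p i : ℕ) : ZMod n) = ((q i : ℕ) : ZMod n) := by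
        exact add_left_cancel h1
      have h3 : ((p i : ℕ) : ZMod n).val = ((q i : ℕ) : ZMod n).val := by rw [h2]
      rw [ZMod.val_natCast_of_lt (by omega : (p i : ℕ) < n),
        ZMod.val_natCast_of_lt (by omega : (q i : ℕ) < n)] at h3
      exact Fin.ext h3
    have hmaps : ∀ p ∈ (Finset.univ : Finset (Fin 2 → Fin (2 * r + 1))),
        (fun i => x i + ((p i : ℕ) : ZMod n)) ∈
          (Finset.univ.filter fun y => torusDist x y ≤ 2 * r) := by
      intro p _
      rw [Finset.mem_filter]
      exact ⟨Finset.mem_univ _, torusDist_add_le x (fun i => (p i : ℕ)) (2 * r)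
        (fun i => by show (p i : ℕ) ≤ 2 * r; have := (p i).isLt; omega)⟩
    have := Finset.card_le_card_of_injOn _ hmaps hinj
    simpa [Fintype.card_fun] using this
  -- upper bound on sparse intersections
  have hsparse : ∀ y : Fin 2 → ZMod n,
      (S.filter fun x => torusDist y x ≤ 2 * r).card ≤ r ^ 2 := by
    intro y
    by_cases hne : (S.filter fun x => torusDist y x ≤ 2 * r).Nonempty
    · obtain ⟨x, hx⟩ := hne
      rw [Finset.mem_filter] at hx
      obtain ⟨hxS, hxy⟩ := hx
      have hxA : x ∈ A \ A₀ := by rwa [hS, Set.Finite.mem_toFinset] at hxS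
      have hx2 : x ∉ A₀ := hxA.2
      rw [hA₀] at hx2
      simp only [Set.mem_setOf_eq, not_and, not_exists, not_le] at hx2
      have hno := hx2 hxA.1
      have hyb : y ∈ torusBall x (2 * r) := by
        simp only [torusBall, Set.mem_setOf_eq, torusDist_comm x y]
        exact hxy
      have hlt := hno y hyb
      have hfin2 : (A ∩ torusBall y (2 * r)).Finite := Set.toFinite _
      have hsub : (S.filter fun x => torusDist y x ≤ 2 * r) ⊆ hfin2.toFinset := by
        intro z hz
        rw [Finset.mem_filter] at hz
        obtain ⟨hzS, hzy⟩ := hz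
        have hzA : z ∈ A \ A₀ := by rwa [hS, Set.Finite.mem_toFinset] at hzS
        rw [Set.Finite.mem_toFinset]
        exact ⟨hzA.1, hzy⟩
      calc (S.filter fun x => torusDist y x ≤ 2 * r).card ≤ hfin2.toFinset.card :=
            Finset.card_le_card hsub
        _ = (A ∩ torusBall y (2 * r)).ncard := (Set.ncard_eq_toFinset_card _ hfin2).symm
        _ ≤ r ^ 2 := le_of_lt hlt
    · rw [Finset.not_nonempty_iff_eq_empty] at hne
      simp [hne]
  -- double counting
  have hdc : (∑ x ∈ S, (Finset.univ.filter fun y => torusDist x y ≤ 2 * r).card)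
      = ∑ y : Fin 2 → ZMod n, (S.filter fun x => torusDist y x ≤ 2 * r).card := by
    simp only [Finset.card_filter]
    rw [Finset.sum_comm]
    exact Finset.sum_congr rfl fun y _ => Finset.sum_congr rfl fun x _ => by
      rw [torusDist_comm]
  have key : S.card * (2 * r + 1) ^ 2 ≤ r ^ 2 * n ^ 2 := by
    calc S.card * (2 * r + 1) ^ 2 = ∑ _x ∈ S, (2 * r + 1) ^ 2 := by
          rw [Finset.sum_const, smul_eq_mul]
      _ ≤ ∑ x ∈ S, (Finset.univ.filter fun y => torusDist x y ≤ 2 * r).card :=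
          Finset.sum_le_sum fun x _ => hball x
      _ = ∑ y : Fin 2 → ZMod n, (S.filter fun x => torusDist y x ≤ 2 * r).card := hdc
      _ ≤ ∑ _y : Fin 2 → ZMod n, r ^ 2 := Finset.sum_le_sum fun y _ => hsparse y
      _ = r ^ 2 * n ^ 2 := by
          rw [Finset.sum_const, smul_eq_mul, Finset.card_univ]
          simp [Fintype.card_fun, ZMod.card]
          ring
  -- to reals
  have keyR : (S.card : ℝ) * (2 * (r : ℝ) + 1) ^ 2 ≤ (r : ℝ) ^ 2 * (n : ℝ) ^ 2 := by
    have := (Nat.cast_le (α := ℝ)).2 key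
    push_cast at this
    convert this using 2 <;> push_cast <;> ring
  have hpos : (0 : ℝ) < (2 * (r : ℝ) + 1) ^ 2 := by positivity
  rw [hcard]
  constructor
  · rw [le_div_iff₀ hpos]
    exact keyR
  · have h4 : (4 : ℝ) * (r : ℝ) ^ 2 ≤ (2 * (r : ℝ) + 1) ^ 2 := by nlinarith [Nat.cast_nonneg (α := ℝ) r]
    have hrpos : (0 : ℝ) < (r : ℝ) ^ 2 := by positivity
    rw [le_div_iff₀ (by norm_num : (0:ℝ) < 4)]
    nlinarith [keyR, Nat.cast_nonneg (α := ℝ) S.card]
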